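/- arXiv:1405.7849 — 3 statements merged into one kernel-verified Lean document; each statement's English description precedes it below -/
import Mathlib

section
/- For all integers n and k with k a multiple of 4 and 4 ≤ k ≤ n, there exists a deterministic OBDD of width 8·2^{k/4} − 5 computing the Boolean function EQS^k_n. -/
/-- Number of 1s in a binary string ν ∈ {0,1}^n. -/
def countOnes {n : ℕ} (ν : Fin n → Bool) : ℕ :=
  (Finset.univ.filter (fun i => ν i = true)).card

/-- Number of 0s in a binary string ν ∈ {0,1}^n. -/
def countZeros {n : ℕ} (ν : Fin n → Bool) : ℕ :=
  (Finset.univ.filter (fun i => ν i = false)).card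

/-- Number of 1s among the first `k` bits. -/
def countOnesFirst (k : ℕ) {n : ℕ} (ν : Fin n → Bool) : ℕ :=
  (Finset.univ.filter (fun i : Fin n => (i : ℕ) < k ∧ ν i = true)).card

/-- Number of 0s among the first `k` bits. -/
def countZerosFirst (k : ℕ) {n : ℕ} (ν : Fin n → Bool) : ℕ :=
  (Finset.univ.filter (fun i : Fin n => (i : ℕ) < k ∧ ν i = false)).card

/-- A deterministic OBDD of width `d` on `n` Boolean variables. -/
structure DOBDD (n d : ℕ) where
  ord : Equiv.Perm (Fin n)
  T : Fin n → Bool → Fin d → Fin d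
  start : Fin d
  Accept : Finset (Fin d)

/-- The node reached by a deterministic OBDD after reading all input bits. -/
def DOBDD.run {n d : ℕ} (M : DOBDD n d) (ν : Fin n → Bool) : Fin d :=
  (List.finRange n).foldl (fun v j => M.T j (ν (M.ord j)) v) M.start

def DOBDD.accepts {n d : ℕ} (M : DOBDD n d) (ν : Fin n → Bool) : Prop :=
  M.run ν ∈ M.Accept

/-- A deterministic OBDD computes a total Boolean function. -/
def DOBDD.computes {n d : ℕ} (M : DOBDD n d) (f : (Fin n → Bool) → Bool) : Prop :=
  ∀ ν, M.accepts ν ↔ f ν = true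

/-- A nondeterministic OBDD of width `d` on `n` Boolean variables. -/
structure NOBDD (n d : ℕ) where
  ord : Equiv.Perm (Fin n)
  T : Fin n → Bool → Fin d → Set (Fin d)
  start : Fin d
  Accept : Finset (Fin d)

/-- The set of nodes reachable by a nondeterministic OBDD after reading all input bits. -/
def NOBDD.reach {n d : ℕ} (M : NOBDD n d) (ν : Fin n → Bool) : Set (Fin d) :=
  (List.finRange n).foldl (fun S j => {w | ∃ v ∈ S, w ∈ M.T j (ν (M.ord j)) v}) {M.start}

def NOBDD.accepts {n d : ℕ} (M : NOBDD n d) (ν : Fin n → Bool) : Prop :=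
  ∃ v ∈ M.reach ν, v ∈ M.Accept

/-- A nondeterministic OBDD computes a total Boolean function. -/
def NOBDD.computes {n d : ℕ} (M : NOBDD n d) (f : (Fin n → Bool) → Bool) : Prop :=
  ∀ ν, M.accepts ν ↔ f ν = true

/-- The class of Boolean functions on n variables computed by deterministic
OBDDs of width at most `w`. -/
def OBDDclass (n w : ℕ) : Set ((Fin n → Bool) → Bool) :=
  {f | ∃ d, d ≤ w ∧ ∃ M : DOBDD n d, M.computes f}

/-- The class of Boolean functions on n variables computed by nondeterministic
OBDDs of width at most `w`. -/
def NOBDDclass (n w : ℕ) : Set ((Fin n → Bool) → Bool) :=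
  {f | ∃ d, d ≤ w ∧ ∃ M : NOBDD n d, M.computes f}

/-- Final probability distribution of a stable probabilistic OBDD given by the pair of
left-stochastic matrices `A`, variable order `ord`, and initial node `s`. -/
noncomputable def stableProbRun {n d : ℕ} (A : Bool → Matrix (Fin d) (Fin d) ℝ)
    (ord : Equiv.Perm (Fin n)) (s : Fin d) (ν : Fin n → Bool) : Fin d → ℝ :=
  (List.finRange n).foldl (fun v j => (A (ν (ord j))).mulVec v)
    (fun i => if i = s then 1 else 0)

/-- Final quantum state of a stable ID quantum OBDD given by the pair of matrices `U`
and the initial computational-basis state `q0`, reading bits in the natural order. -/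
noncomputable def quantumRunStable {n d : ℕ} (U : Bool → Matrix (Fin d) (Fin d) ℂ) (q0 : Fin d)
    (ν : Fin n → Bool) : Fin d → ℂ :=
  (List.finRange n).foldl (fun ψ j => (U (ν j)).mulVec ψ)
    (fun i => if i = q0 then 1 else 0)

/-- A quantum OBDD of width `d` on `n` Boolean variables. -/
structure QOBDD (n d : ℕ) where
  ord : Equiv.Perm (Fin n)
  U : Fin n → Bool → Matrix (Fin d) (Fin d) ℂ
  unitary : ∀ j b, U j b ∈ Matrix.unitaryGroup (Fin d) ℂ
  q0 : Fin d
  Accept : Finset (Fin d)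

/-- The final state of a quantum OBDD on input ν. -/
noncomputable def QOBDD.finalState {n d : ℕ} (M : QOBDD n d) (ν : Fin n → Bool) : Fin d → ℂ :=
  (List.finRange n).foldl (fun ψ j => (M.U j (ν (M.ord j))).mulVec ψ)
    (fun i => if i = M.q0 then 1 else 0)

/-- The acceptance probability of a quantum OBDD on input ν. -/
noncomputable def QOBDD.acceptProb {n d : ℕ} (M : QOBDD n d) (ν : Fin n → Bool) : ℝ :=
  ∑ i ∈ M.Accept, Complex.normSq (M.finalState ν i)

/-- `NotO_n(ν) = 0` iff `#0(ν) = #1(ν)`. -/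
def NotO (n : ℕ) (ν : Fin n → Bool) : Bool := !decide (countZeros ν = countOnes ν)

/-- `NotSQUARE_n(ν) = 0` iff `(#0(ν))² = #1(ν)`. -/
def NotSQUARE (n : ℕ) (ν : Fin n → Bool) : Bool := !decide ((countZeros ν) ^ 2 = countOnes ν)

/-- `NotPOWER_n(ν) = 0` iff `2^{#0(ν)} = #1(ν)`. -/
def NotPOWER (n : ℕ) (ν : Fin n → Bool) : Bool := !decide (2 ^ (countZeros ν) = countOnes ν)

/-- `MOD^k_n(ν) = 1` iff `#1(ν) ≡ 0 (mod k)`. -/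
def MODf (n k : ℕ) (ν : Fin n → Bool) : Bool := decide (countOnes ν % k = 0)

/-- `NotO^k_n(ν) = 0` iff `#^k_0(ν) = #^k_1(ν) = k/2`. -/
def NotOk (n k : ℕ) (ν : Fin n → Bool) : Bool :=
  !decide (countZerosFirst k ν = k / 2 ∧ countOnesFirst k ν = k / 2)

/-- The ordered subsequence of value bits `ν_{2i}` (1-indexed, `1 ≤ i ≤ k/2`) whose
marker bit `ν_{2i-1}` equals `b`; `b = false` gives `α(ν)` and `b = true` gives `β(ν)`. -/
def valueSubseq {n : ℕ} (k : ℕ) (b : Bool) (ν : Fin n → Bool) : List Bool :=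
  (List.range (k / 2)).filterMap (fun j =>
    if h : 2 * j + 1 < n then
      if ν ⟨2 * j, by omega⟩ = b then some (ν ⟨2 * j + 1, h⟩) else none
    else none)

/-- `EQS^k_n(ν) = 1` iff `α(ν) = β(ν)`. -/
def EQS (n k : ℕ) (ν : Fin n → Bool) : Bool :=
  decide (valueSubseq k false ν = valueSubseq k true ν)

/-- `NotEQS^k_n(ν) = 1 - EQS^k_n(ν)`. -/
def NotEQS (n k : ℕ) (ν : Fin n → Bool) : Bool := !(EQS n k ν)

/-!
Read the (marker, value) pairs in order and remember only how the two streams read so far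
differ: when one of them is a prefix of the other, the surplus word of the longer one and
the marker it belongs to; in any other situation the input is rejected at once. A surplus
longer than `k/4` is rejected as well, since `α = β` forces `|α| = |β| ≤ k/4`. Adding one
bit for the marker of the pair being read, there are `1 + 2 (2^(k/4+2) - 3) = 8·2^(k/4) - 5`
reachable states.
-/

theorem DOBDD.exists_computes_of_automaton {n d : ℕ} {σ : Type*}
    (δ : Fin n → Bool → σ → σ) (s₀ : σ) (accept : σ → Prop) {f : (Fin n → Bool) → Bool}
    (hf : ∀ ν, accept ((List.finRange n).foldl (fun s j => δ j (ν j) s) s₀) ↔ f ν = true)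
    (V : Set σ) (hs₀ : s₀ ∈ V) (hδ : ∀ j b, Set.MapsTo (δ j b) V V)
    (num : σ → ℕ) (hnum : Set.InjOn num V) (hlt : ∀ s ∈ V, num s < d) :
    ∃ M : DOBDD n d, M.computes f := by
  classical
  have : NeZero d := ⟨by have := hlt s₀ hs₀; omega⟩
  have : Nonempty σ := ⟨s₀⟩
  set enc : σ → Fin d := fun s => Fin.ofNat d (num s)
  have henc : Set.InjOn enc V := fun s hs t ht h => hnum hs ht <| by
    simpa [enc, Fin.ext_iff, Nat.mod_eq_of_lt (hlt s hs), Nat.mod_eq_of_lt (hlt t ht)] using h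
  set dec := Function.invFunOn enc V
  have hdec : ∀ s ∈ V, dec (enc s) = s := fun s hs => henc.leftInvOn_invFunOn hs
  refine ⟨⟨Equiv.refl _, fun j b v => enc (δ j b (dec v)), enc s₀,
    Finset.univ.filter (fun v => accept (dec v))⟩, fun ν => ?_⟩
  have hsim : ∀ (L : List (Fin n)) s, s ∈ V →
      L.foldl (fun v j => enc (δ j (ν j) (dec v))) (enc s)
          = enc (L.foldl (fun s j => δ j (ν j) s) s) ∧
        L.foldl (fun s j => δ j (ν j) s) s ∈ V := by
    intro L
    induction L with
    | nil => exact fun s hs => ⟨rfl, hs⟩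
    | cons j L ih =>
      intro s hs
      simpa only [List.foldl_cons, hdec s hs] using ih _ (hδ j (ν j) hs)
  obtain ⟨hrun, hV⟩ := hsim (List.finRange n) s₀ hs₀
  simp only [DOBDD.accepts, DOBDD.run, Equiv.refl_apply, hrun, Finset.mem_filter,
    Finset.mem_univ, true_and, hdec _ hV, hf]

def binCode : List Bool → ℕ
  | [] => 1
  | b :: l => 2 * binCode l + b.toNat

theorem two_pow_length_le_binCode : ∀ l : List Bool, 2 ^ l.length ≤ binCode l
  | [] => le_rfl
  | b :: l => by
    have := two_pow_length_le_binCode l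
    simp only [binCode, List.length_cons, pow_succ]
    omega

theorem binCode_lt_two_pow : ∀ l : List Bool, binCode l < 2 ^ (l.length + 1)
  | [] => by simp [binCode]
  | b :: l => by
    have := binCode_lt_two_pow l
    have := Bool.toNat_le b
    simp only [binCode, List.length_cons, pow_succ] at *
    omega

theorem binCode_injective : Function.Injective binCode := by
  intro l₁
  induction l₁ with
  | nil =>
    rintro (_ | ⟨b, l⟩) h
    · rfl
    · have := two_pow_length_le_binCode l
      have := Nat.one_le_two_pow (n := l.length)
      simp only [binCode] at h
      omega
  | cons b₁ l₁ ih =>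
    rintro (_ | ⟨b₂, l₂⟩) h
    · have := Nat.one_le_two_pow (n := l₁.length)
      have := two_pow_length_le_binCode l₁
      simp only [binCode] at h
      omega
    · have := Bool.toNat_le b₁
      have := Bool.toNat_le b₂
      simp only [binCode] at h
      have hb : b₁ = b₂ := by cases b₁ <;> cases b₂ <;> simp at * <;> omega
      rw [hb, ih (by omega : binCode l₁ = binCode l₂)]

theorem binCode_cons_cons_ge (b c : Bool) (l : List Bool) : 4 ≤ binCode (b :: c :: l) := by
  have hcode := two_pow_length_le_binCode (b :: c :: l)
  have := Nat.one_le_two_pow (n := l.length)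
  simp only [List.length_cons, pow_succ] at hcode
  omega

namespace EQS

def stream (b : Bool) (ps : List (Bool × Bool)) : List Bool :=
  ps.filterMap fun x => if x.1 = b then some x.2 else none

@[simp]
theorem stream_append (b : Bool) (ps qs : List (Bool × Bool)) :
    stream b (ps ++ qs) = stream b ps ++ stream b qs :=
  List.filterMap_append

@[simp]
theorem stream_singleton (b c v : Bool) :
    stream b [(c, v)] = if c = b then [v] else [] := by
  by_cases h : c = b <;> simp [stream, h]

theorem length_stream_false_add_length_stream_true (ps : List (Bool × Bool)) :
    (stream false ps).length + (stream true ps).length = ps.length := by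
  induction ps using List.reverseRecOn with
  | nil => rfl
  | append_singleton ps x ih =>
    obtain ⟨c, v⟩ := x
    cases c <;> simp <;> omega

abbrev Lead := List Bool × Bool

/-- The balanced lead has the single representative `([], false)`. -/
def Lead.Valid (m : ℕ) (e : Lead) : Prop :=
  e.1.length ≤ m ∧ (e.1 = [] → e.2 = false)

def Leads (ps : List (Bool × Bool)) (e : Lead) : Prop :=
  stream e.2 ps = stream (!e.2) ps ++ e.1

def pairStep (m : ℕ) : Bool × Bool → Lead → Option Lead
  | (c, v), (y :: l, side) =>
    if c = side then
      if l.length + 1 < m then some (y :: l ++ [v], side) else none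
    else
      if v = y then some (l, if l = [] then false else side) else none
  | (c, v), ([], _) => if 0 < m then some ([v], c) else none

theorem valid_of_pairStep_eq_some {m : ℕ} {e e' : Lead} (he : e.Valid m) {x : Bool × Bool}
    (h : pairStep m x e = some e') : e'.Valid m := by
  obtain ⟨_ | ⟨y, l⟩, side⟩ := e <;> obtain ⟨c, v⟩ := x
  · simp only [pairStep, Option.ite_none_right_eq_some, Option.some.injEq] at h
    obtain ⟨hm, rfl⟩ := h
    exact ⟨by simp; omega, by simp⟩
  · have hl : l.length + 1 ≤ m := he.1
    simp only [pairStep] at h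
    split_ifs at h with _ _ _ hl' <;> cases h
    · exact ⟨by simp; omega, by simp⟩
    · exact ⟨by simp; omega, fun _ => rfl⟩
    · exact ⟨by simp; omega, fun h => absurd h hl'⟩

theorem leads_of_pairStep_eq_some {m : ℕ} {ps : List (Bool × Bool)} {e e' : Lead}
    (he : Leads ps e) {x : Bool × Bool} (h : pairStep m x e = some e') : Leads (ps ++ [x]) e' := by
  obtain ⟨_ | ⟨y, l⟩, side⟩ := e <;> obtain ⟨c, v⟩ := x
  · simp only [pairStep, Option.ite_none_right_eq_some, Option.some.injEq] at h
    obtain ⟨-, rfl⟩ := h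
    cases c <;> cases side <;> simp_all [Leads]
  · simp only [pairStep] at h
    split_ifs at h with hc _ hv <;> cases h
    · subst hc; simp_all [Leads]
    · cases c <;> cases side <;> simp_all [Leads]
    · subst hv; cases c <;> cases side <;> simp_all [Leads]


theorem pairStep_ne_none {m : ℕ} {ps : List (Bool × Bool)} {e : Lead} (he : Leads ps e)
    {x : Bool × Bool} {w : List Bool} (hw : w.length ≤ m)
    (h : ∀ b, stream b (ps ++ [x]) <+: w) :
    pairStep m x e ≠ none := by
  obtain ⟨_ | ⟨y, l⟩, side⟩ := e <;> obtain ⟨c, v⟩ := x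
  · have := (h c).length_le
    simp only [pairStep, ne_eq, ite_eq_right_iff, reduceCtorEq, imp_false, not_lt]
    simp at this
    omega
  · simp only [Leads] at he
    simp only [pairStep]
    split_ifs with hc hl hv <;>
      simp only [ne_eq, reduceCtorEq, not_false_eq_true, not_true_eq_false]
    · subst hc
      have := (h c).length_le
      simp [he] at this
      omega
    · obtain rfl : c = !side := by cases c <;> cases side <;> simp_all
      have hlong := h side
      have hshort := h (!side)
      simp only [stream_append, stream_singleton, he, Bool.not_ne_self, if_false, if_true,
        List.append_nil] at hlong hshort
      have := List.prefix_of_prefix_length_le hshort hlong (by simp)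
      simp_all [List.prefix_append_right_inj]

def runPairs (m : ℕ) (ps : List (Bool × Bool)) : Option Lead :=
  ps.foldl (fun o x => o.bind (pairStep m x)) (some ([], false))

@[simp]
theorem runPairs_nil (m : ℕ) : runPairs m [] = some ([], false) := rfl

@[simp]
theorem runPairs_append_singleton (m : ℕ) (ps : List (Bool × Bool)) (x : Bool × Bool) :
    runPairs m (ps ++ [x]) = (runPairs m ps).bind (pairStep m x) := by
  simp [runPairs]

theorem valid_leads_of_runPairs_eq_some {m : ℕ} {ps : List (Bool × Bool)} {e : Lead}
    (h : runPairs m ps = some e) : e.Valid m ∧ Leads ps e := by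
  induction ps using List.reverseRecOn generalizing e with
  | nil =>
    obtain rfl : e = ([], false) := (Option.some_injective _ h).symm
    exact ⟨⟨by simp, fun _ => rfl⟩, rfl⟩
  | append_singleton ps x ih =>
    rw [runPairs_append_singleton, Option.bind_eq_some_iff] at h
    obtain ⟨e₀, h₀, hx⟩ := h
    obtain ⟨hv, hl⟩ := ih h₀
    exact ⟨valid_of_pairStep_eq_some hv hx, leads_of_pairStep_eq_some hl hx⟩

theorem runPairs_ne_none {m : ℕ} {ps : List (Bool × Bool)} {w : List Bool} (hw : w.length ≤ m)
    (h : ∀ b, stream b ps <+: w) : runPairs m ps ≠ none := by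
  induction ps using List.reverseRecOn with
  | nil => simp
  | append_singleton ps x ih =>
    obtain ⟨e, he⟩ := Option.ne_none_iff_exists'.mp
      (ih fun b => (List.prefix_append _ _).trans (stream_append b ps [x] ▸ h b))
    rw [runPairs_append_singleton, he, Option.bind_some]
    exact pairStep_ne_none (valid_leads_of_runPairs_eq_some he).2 hw h

theorem runPairs_eq_some_nil_iff {m : ℕ} {ps : List (Bool × Bool)} (hps : ps.length ≤ 2 * m) :
    runPairs m ps = some ([], false) ↔ stream false ps = stream true ps := by
  refine ⟨fun h => by simpa [Leads] using (valid_leads_of_runPairs_eq_some h).2, fun h => ?_⟩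
  have hw : (stream false ps).length ≤ m := by
    have := length_stream_false_add_length_stream_true ps
    rw [h] at this ⊢
    omega
  obtain ⟨⟨l, side⟩, he⟩ := Option.ne_none_iff_exists'.mp
    (runPairs_ne_none (ps := ps) hw fun b => by cases b <;> simp [h])
  obtain ⟨⟨-, hcan⟩, hlead⟩ := valid_leads_of_runPairs_eq_some he
  have hl : l = [] := by cases side <;> simpa [Leads, h] using hlead
  obtain rfl : side = false := hcan hl
  rw [he, hl]


abbrev State := Option (Lead × Bool)

def State.Valid (m : ℕ) (s : State) : Prop :=
  ∀ x ∈ s, x.1.Valid m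

def bitStep (m k j : ℕ) (b : Bool) (s : State) : State :=
  if k ≤ j then s
  else s.bind fun x => if Even j then some (x.1, b) else (pairStep m (x.2, b) x.1).map (·, false)

theorem mapsTo_bitStep {m k j : ℕ} {b : Bool} :
    Set.MapsTo (bitStep m k j b) {s | s.Valid m} {s | s.Valid m} := by
  rintro (_ | ⟨e, c⟩) hs ⟨e', c'⟩ h
  · simp [bitStep] at h
  · have he : e.Valid m := hs _ rfl
    simp only [bitStep, Option.bind_some] at h
    split_ifs at h
    · cases h; exact he
    · cases h; exact he
    · obtain ⟨e'', hx, -⟩ := Option.map_eq_some_iff.mp h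
      obtain rfl : e'' = e' := by simp_all
      exact valid_of_pairStep_eq_some he hx

section Runs

variable {n : ℕ} (ν : Fin n → Bool)

def bitAt (i : ℕ) : Bool :=
  if h : i < n then ν ⟨i, h⟩ else false

def markedPairs (t : ℕ) : List (Bool × Bool) :=
  (List.range t).map fun j => (bitAt ν (2 * j), bitAt ν (2 * j + 1))

def runBits (m k j : ℕ) : State :=
  (List.range j).foldl (fun s i => bitStep m k i (bitAt ν i) s) (some (([], false), false))

theorem valueSubseq_eq_stream {k : ℕ} (h : k ≤ n) (b : Bool) :
    valueSubseq k b ν = stream b (markedPairs ν (k / 2)) := by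
  simp only [valueSubseq, stream, markedPairs, List.filterMap_map]
  refine List.filterMap_congr fun j hj => ?_
  have hj : 2 * j + 1 < n := by simp at hj; omega
  simp [hj, bitAt, show 2 * j < n by omega]

theorem foldl_finRange_bitStep (m k : ℕ) :
    (List.finRange n).foldl (fun s (j : Fin n) => bitStep m k j (ν j) s)
      (some (([], false), false)) = runBits ν m k n := by
  rw [runBits, ← List.map_coe_finRange_eq_range, List.foldl_map]
  congr
  funext s j
  simp [bitAt]

theorem runBits_two_mul {m k t : ℕ} (ht : 2 * t ≤ k) :
    runBits ν m k (2 * t) = (runPairs m (markedPairs ν t)).map (·, false) := by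
  induction t with
  | zero => rfl
  | succ t ih =>
    have hk : ¬k ≤ 2 * t := by omega
    have hk' : ¬k ≤ 2 * t + 1 := by omega
    have hpairs : markedPairs ν (t + 1)
        = markedPairs ν t ++ [(bitAt ν (2 * t), bitAt ν (2 * t + 1))] := by
      simp [markedPairs, List.range_succ]
    rw [show 2 * (t + 1) = 2 * t + 1 + 1 by ring, runBits, List.range_succ, List.range_succ,
      List.foldl_append, List.foldl_append, ← runBits, ih (by omega), hpairs,
      runPairs_append_singleton]
    cases runPairs m (markedPairs ν t) <;>
      simp [bitStep, hk, hk']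

theorem runBits_eq_of_le {m k j : ℕ} (h : k ≤ j) : runBits ν m k j = runBits ν m k k := by
  obtain ⟨i, rfl⟩ := Nat.exists_eq_add_of_le h
  rw [runBits, List.range_add, List.foldl_append, ← runBits, List.foldl_map]
  exact List.foldl_fixed' (fun i => by simp [bitStep]) _

end Runs

def Lead.encode : Lead → ℕ
  | ([], _) => 0
  | (y :: l, side) => binCode (side :: y :: l) - 3

def State.encode : State → ℕ
  | none => 0
  | some (e, c) => 2 * e.encode + c.toNat + 1

theorem Lead.encode_lt {m : ℕ} {e : Lead} (he : e.Valid m) : e.encode < 2 ^ (m + 2) - 3 := by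
  obtain ⟨_ | ⟨y, l⟩, side⟩ := e
  · have : 2 ^ (m + 2) = 4 * 2 ^ m := by ring
    have := Nat.one_le_two_pow (n := m)
    simp only [encode]
    omega
  · have hl : l.length + 1 ≤ m := he.1
    have hcode : binCode (side :: y :: l) < 2 ^ (l.length + 3) := binCode_lt_two_pow _
    have := Nat.pow_le_pow_right (n := 2) (by norm_num) (show l.length + 3 ≤ m + 2 by omega)
    have := binCode_cons_cons_ge side y l
    simp only [encode]
    omega

theorem Lead.encode_injOn (m : ℕ) : Set.InjOn Lead.encode {e | e.Valid m} := by
  rintro ⟨_ | ⟨y, l⟩, side⟩ he ⟨_ | ⟨y', l'⟩, side'⟩ he' h <;>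
    simp only [Set.mem_ofPred_eq, Lead.Valid] at he he' <;> simp only [encode] at h
  · rw [he.2 trivial, he'.2 trivial]
  · have := binCode_cons_cons_ge side' y' l'
    omega
  · have := binCode_cons_cons_ge side y l
    omega
  · have := binCode_cons_cons_ge side y l
    have := binCode_cons_cons_ge side' y' l'
    have := binCode_injective (show binCode (side :: y :: l) = binCode (side' :: y' :: l') by omega)
    simp_all

theorem State.encode_lt {m : ℕ} {s : State} (hs : s.Valid m) : s.encode < 8 * 2 ^ m - 5 := by
  have : 2 ^ (m + 2) * 2 = 8 * 2 ^ m := by ring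
  obtain _ | ⟨e, c⟩ := s
  · have := Nat.one_le_two_pow (n := m)
    simp only [encode]
    omega
  · have := Lead.encode_lt (show e.Valid m from hs (e, c) rfl)
    have := Bool.toNat_le c
    simp only [encode]
    omega

theorem State.encode_injOn (m : ℕ) : Set.InjOn State.encode {s | s.Valid m} := by
  rintro (_ | ⟨e, c⟩) hs (_ | ⟨e', c'⟩) hs' h <;> simp only [encode] at h
  · rfl
  · omega
  · omega
  · obtain rfl : c = c' := by
      cases c <;> cases c' <;> simp only [Bool.toNat_false, Bool.toNat_true] at h <;>
        first | rfl | omega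
    have he : e.Valid m := hs (e, c) rfl
    have he' : e'.Valid m := hs' (e', c) rfl
    rw [Lead.encode_injOn m he he' (by omega)]

end EQS

theorem EQS_upper_bound_general (n k : ℕ) (hk : 4 ∣ k) (h2 : k ≤ n) :
    ∃ M : DOBDD n (8 * 2 ^ (k / 4) - 5), M.computes (EQS n k) := by
  obtain ⟨q, rfl⟩ := hk
  rw [show 4 * q / 4 = q by omega]
  refine DOBDD.exists_computes_of_automaton (EQS.bitStep q (4 * q) ·) (some (([], false), false))
    (· = some (([], false), false)) (fun ν => ?_) {s | s.Valid q}
    (by simp [EQS.State.Valid, EQS.Lead.Valid]) (fun _ _ => EQS.mapsTo_bitStep)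
    EQS.State.encode (EQS.State.encode_injOn q) fun _ => EQS.State.encode_lt
  have hfinal : EQS.runBits ν q (4 * q) n
      = (EQS.runPairs q (EQS.markedPairs ν (2 * q))).map (·, false) := by
    rw [EQS.runBits_eq_of_le ν h2, show 4 * q = 2 * (2 * q) by ring, EQS.runBits_two_mul ν le_rfl]
  have hlen : (EQS.markedPairs ν (2 * q)).length ≤ 2 * q := by simp [EQS.markedPairs]
  rw [EQS.foldl_finRange_bitStep, hfinal]
  simp [EQS, EQS.valueSubseq_eq_stream ν h2, show 4 * q / 2 = 2 * q by omega,
    EQS.runPairs_eq_some_nil_iff hlen]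

/-- For all `n, k` with `4 ∣ k` and `4 ≤ k ≤ n`, there is a deterministic OBDD of width
`8·2^{k/4} - 5` computing `EQS^k_n`. -/
theorem EQS_upper_bound (n k : ℕ) (hk : 4 ∣ k) (h1 : 4 ≤ k) (h2 : k ≤ n) :
    ∃ M : DOBDD n (8 * 2 ^ (k / 4) - 5), M.computes (EQS n k) :=
  EQS_upper_bound_general n k hk h2
end

section
/- For every integer k that is a multiple of 4 with k ≥ 4, there are infinitely many n such that every deterministic OBDD on n variables computing the Boolean function NotEQS^k_n has width at least 2^{k/4}. -/
/-!
A fooling-set argument. Cut the variable order of the OBDD at a step `t` after which exactly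
half of the `k/2` value bits have been read; such a step exists because the number of value
bits read grows by at most one per step. Mark the pairs whose value bit is read early for `α`
and the others for `β`, and let `ν x y` carry `x` on the early value bits and `y` on the late
ones, so that `NotEQS (ν x y)` holds iff `x ≠ y`. If `ν x x` and `ν x' x'` reached the same
node after `t` steps, then `ν x x'` would end in the same node as `ν x' x'`, yet one is accepted
and the other is not. So the `2^(k/4)` inputs `ν x x` reach pairwise distinct nodes at step `t`.
-/

open Finset

theorem Nat.exists_eq_of_succ_le_add_one {f : ℕ → ℕ} (hf : ∀ t, f (t + 1) ≤ f t + 1)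
    {q N : ℕ} (h0 : f 0 ≤ q) (hN : q ≤ f N) : ∃ t, f t = q := by
  induction N with
  | zero => exact ⟨0, le_antisymm h0 hN⟩
  | succ N ih =>
    by_cases h : q ≤ f N
    · exact ih h
    · exact ⟨N + 1, by have := hf N; omega⟩

theorem Finset.exists_card_filter_lt_eq {α : Type*} (s : Finset α) {r : α → ℕ}
    (hr : Set.InjOn r s) {q : ℕ} (hq : q ≤ #s) : ∃ t, #(s.filter (r · < t)) = q := by
  classical
  refine Nat.exists_eq_of_succ_le_add_one (fun t => ?_) (N := s.sup r + 1) (by simp) ?_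
  · have hsub : s.filter (r · < t + 1) ⊆ s.filter (r · < t) ∪ s.filter (r · = t) := by
      intro a
      simp only [mem_filter, mem_union]
      intro h
      exact (Nat.lt_succ_iff_lt_or_eq.1 h.2).imp (⟨h.1, ·⟩) (⟨h.1, ·⟩)
    have hat_most_one : #(s.filter (r · = t)) ≤ 1 :=
      card_le_one.2 fun a ha b hb => by
        simp only [mem_filter] at ha hb
        exact hr ha.1 hb.1 (ha.2.trans hb.2.symm)
    calc #(s.filter (r · < t + 1))
        ≤ #(s.filter (r · < t)) + #(s.filter (r · = t)) :=
          (card_le_card hsub).trans (card_union_le _ _)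
      _ ≤ #(s.filter (r · < t)) + 1 := by omega
  · rwa [filter_true_of_mem fun a ha => Nat.lt_succ_of_le (le_sup ha)]

theorem List.filterMap_ite_some {α β : Type*} (p : α → Prop) [DecidablePred p] (g : α → β)
    (l : List α) :
    l.filterMap (fun a => if p a then some (g a) else none) = (l.filter (p ·)).map g := by
  induction l with
  | nil => rfl
  | cons a l ih => by_cases h : p a <;> simp [h, ih]

theorem List.map_getD_idxOf {α β : Type*} [BEq α] [LawfulBEq α] {L : List α} (hL : L.Nodup)
    {l : List β} (hlen : L.length = l.length) (d : β) :
    L.map (fun a => l.getD (L.idxOf a) d) = l := by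
  refine List.ext_getElem (by simp [hlen]) fun i h₁ h₂ => ?_
  simp [hL.idxOf_getElem, List.getElem?_eq_getElem h₂]

namespace DOBDD

variable {n d : ℕ} (M : DOBDD n d)

def stateAfter (t : ℕ) (ν : Fin n → Bool) : Fin d :=
  ((List.finRange n).take t).foldl (fun v j => M.T j (ν (M.ord j)) v) M.start

def runFrom (t : ℕ) (v : Fin d) (ν : Fin n → Bool) : Fin d :=
  ((List.finRange n).drop t).foldl (fun v j => M.T j (ν (M.ord j)) v) v

theorem run_eq_runFrom_stateAfter (t : ℕ) (ν : Fin n → Bool) :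
    M.run ν = M.runFrom t (M.stateAfter t ν) ν := by
  rw [run, runFrom, stateAfter, ← List.foldl_append, List.take_append_drop]

theorem stateAfter_congr {t : ℕ} {ν ν' : Fin n → Bool}
    (h : ∀ p, (M.ord.symm p : ℕ) < t → ν p = ν' p) :
    M.stateAfter t ν = M.stateAfter t ν' := by
  refine List.foldl_ext _ _ _ fun v j hj => ?_
  obtain ⟨i, hi, rfl⟩ := List.mem_take_iff_getElem.1 hj
  rw [h]
  simp only [List.getElem_finRange, Equiv.symm_apply_apply, Fin.val_cast]
  omega

theorem runFrom_congr {t : ℕ} {v : Fin d} {ν ν' : Fin n → Bool}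
    (h : ∀ p, t ≤ (M.ord.symm p : ℕ) → ν p = ν' p) :
    M.runFrom t v ν = M.runFrom t v ν' := by
  refine List.foldl_ext _ _ _ fun v j hj => ?_
  obtain ⟨i, hi, rfl⟩ := List.mem_iff_getElem.1 hj
  rw [h]
  simp only [List.getElem_drop, List.getElem_finRange, Equiv.symm_apply_apply, Fin.val_cast]
  omega

theorem card_le_of_fooling_rectangle {f : (Fin n → Bool) → Bool} (hM : M.computes f)
    {X : Type*} [Fintype X] (t : ℕ) (ν : X → X → Fin n → Bool)
    (h_early : ∀ x y y' p, (M.ord.symm p : ℕ) < t → ν x y p = ν x y' p)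
    (h_late : ∀ x x' y p, t ≤ (M.ord.symm p : ℕ) → ν x y p = ν x' y p)
    (h_fool : ∀ x y, f (ν x y) = true ↔ x ≠ y) : Fintype.card X ≤ d := by
  suffices Function.Injective fun x => M.stateAfter t (ν x x) by
    simpa using Fintype.card_le_of_injective _ this
  intro x x' (hxx' : M.stateAfter t (ν x x) = M.stateAfter t (ν x' x'))
  by_contra hne
  have hrun : M.run (ν x x') = M.run (ν x' x') := by
    rw [run_eq_runFrom_stateAfter, run_eq_runFrom_stateAfter, M.stateAfter_congr (h_early x x' x),
      hxx', M.runFrom_congr (h_late x x' x')]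
  have hacc : M.accepts (ν x x') := (hM _).2 ((h_fool x x').2 hne)
  rw [accepts, hrun] at hacc
  exact (h_fool x' x').1 ((hM _).1 hacc) rfl

def readTime (i : ℕ) : ℕ := if h : i < n then M.ord.symm ⟨i, h⟩ else n

theorem readTime_coe (p : Fin n) : M.readTime p = M.ord.symm p := dif_pos p.isLt

theorem readTime_injOn : Set.InjOn M.readTime (Set.Iio n) := by
  intro i (hi : i < n) j (hj : j < n) hij
  simpa [readTime, dif_pos hi, dif_pos hj, Fin.val_inj] using hij

end DOBDD

theorem valueSubseq_eq_map_filter {n k : ℕ} (hk : k ≤ n) (c : Bool) (w : ℕ → Bool) :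
    valueSubseq k c (fun p : Fin n => w p) =
      ((List.range (k / 2)).filter fun j => w (2 * j) = c).map fun j => w (2 * j + 1) := by
  rw [valueSubseq, ← List.filterMap_ite_some]
  refine List.filterMap_congr fun j hj => ?_
  rw [dif_pos (by simp at hj; omega)]

/-- Pair `j < m` is marked for `α` iff `e j`; the value bits of the `α`-pairs spell out `a` and
those of the `β`-pairs spell out `b`, each in increasing order of `j`. -/
def splitWord (m : ℕ) (e : ℕ → Bool) (a b : List Bool) (i : ℕ) : Bool :=
  if i % 2 = 0 then !e (i / 2)
  else if e (i / 2) then a.getD (((List.range m).filter e).idxOf (i / 2)) false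
  else b.getD (((List.range m).filter (!e ·)).idxOf (i / 2)) false

section splitWord

variable {m : ℕ} {e : ℕ → Bool} {a b : List Bool}

theorem splitWord_two_mul (j : ℕ) : splitWord m e a b (2 * j) = !e j := by
  simp [splitWord]

theorem splitWord_two_mul_add_one (j : ℕ) :
    splitWord m e a b (2 * j + 1) =
      if e j then a.getD (((List.range m).filter e).idxOf j) false
      else b.getD (((List.range m).filter (!e ·)).idxOf j) false := by
  simp [splitWord, Nat.add_mod, show (2 * j + 1) / 2 = j by omega]

theorem splitWord_congr_right {i : ℕ} (h : i % 2 = 1 → e (i / 2) = true) (b' : List Bool) :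
    splitWord m e a b i = splitWord m e a b' i := by
  unfold splitWord
  split_ifs <;> simp_all

theorem splitWord_congr_left {i : ℕ} (h : i % 2 = 1 → e (i / 2) = false) (a' : List Bool) :
    splitWord m e a b i = splitWord m e a' b i := by
  unfold splitWord
  split_ifs <;> simp_all

theorem EQS_splitWord {n k : ℕ} (hk : k ≤ n)
    (ha : ((List.range (k / 2)).filter e).length = a.length)
    (hb : ((List.range (k / 2)).filter (!e ·)).length = b.length) :
    EQS n k (fun p => splitWord (k / 2) e a b p) = decide (a = b) := by
  have hα : valueSubseq k false (fun p : Fin n => splitWord (k / 2) e a b p) = a := by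
    rw [valueSubseq_eq_map_filter hk]
    simp only [splitWord_two_mul, Bool.not_eq_false', Bool.decide_eq_true]
    refine (List.map_congr_left fun j hj => ?_).trans
      (List.map_getD_idxOf (List.nodup_range.filter _) ha false)
    simp [splitWord_two_mul_add_one, (List.mem_filter.1 hj).2]
  have hβ : valueSubseq k true (fun p : Fin n => splitWord (k / 2) e a b p) = b := by
    rw [valueSubseq_eq_map_filter hk]
    simp only [splitWord_two_mul, Bool.decide_eq_true]
    refine (List.map_congr_left fun j hj => ?_).trans
      (List.map_getD_idxOf (List.nodup_range.filter _) hb false)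
    simp [splitWord_two_mul_add_one, by simpa using (List.mem_filter.1 hj).2]
  rw [EQS, hα, hβ]

end splitWord

theorem DOBDD.two_pow_le_of_computes_notEQS {n d q : ℕ} (M : DOBDD n d) (hn : 4 * q ≤ n)
    (hM : M.computes (NotEQS n (4 * q))) : 2 ^ q ≤ d := by
  obtain ⟨t, ht⟩ := (range (4 * q / 2)).exists_card_filter_lt_eq (q := q)
    (M.readTime_injOn.comp (f := (2 * · + 1)) (fun i _ j _ (h : 2 * i + 1 = 2 * j + 1) => by omega)
      fun j hj => by simp at hj ⊢; omega)
    (by simp; omega)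
  set e : ℕ → Bool := fun j => M.readTime (2 * j + 1) < t with he
  have he_odd : ∀ p : Fin n, (p : ℕ) % 2 = 1 →
      e (p / 2) = decide ((M.ord.symm p : ℕ) < t) := by
    intro p hp
    simp only [he, show 2 * ((p : ℕ) / 2) + 1 = p by omega, M.readTime_coe]
  have hα : ((List.range (4 * q / 2)).filter e).length = q := by
    convert ht using 1
    simp [card_def, Multiset.range, Multiset.filter_coe, he]
  have hβ : ((List.range (4 * q / 2)).filter (!e ·)).length = q := by
    have := List.length_eq_length_filter_add (l := List.range (4 * q / 2)) e
    simp only [List.length_range] at this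
    omega
  have := M.card_le_of_fooling_rectangle hM t
    (fun x y p => splitWord (4 * q / 2) e (List.ofFn x) (List.ofFn y) p)
    (fun x y y' p hp => splitWord_congr_right (fun hodd => he_odd p hodd ▸ decide_eq_true hp) _)
    (fun x x' y p hp => splitWord_congr_left
      (fun hodd => he_odd p hodd ▸ decide_eq_false (not_lt.2 hp)) _)
    (fun x y => by rw [NotEQS, EQS_splitWord (by omega) (by simpa) (by simpa)]; simp)
  simpa using this

theorem notEQS_deterministic_lower_bound_general (k : ℕ) (hk : 4 ∣ k) :
    ∀ N : ℕ, ∃ n, N ≤ n ∧ k ≤ n ∧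
      ∀ (d : ℕ) (M : DOBDD n d), M.computes (NotEQS n k) → 2 ^ (k / 4) ≤ d := by
  obtain ⟨q, rfl⟩ := hk
  refine fun N => ⟨max N (4 * q), le_max_left _ _, le_max_right _ _, fun d M hM => ?_⟩
  simpa using M.two_pow_le_of_computes_notEQS (le_max_right _ _) hM

/-- For every `k` a multiple of 4 with `k ≥ 4`, there are infinitely many `n` such that
any deterministic OBDD computing `NotEQS^k_n` has width at least `2^{k/4}`. -/
theorem notEQS_deterministic_lower_bound (k : ℕ) (hk : 4 ∣ k) (h1 : 4 ≤ k) :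
    ∀ N : ℕ, ∃ n, N ≤ n ∧ k ≤ n ∧
      ∀ (d : ℕ) (M : DOBDD n d), M.computes (NotEQS n k) → 2 ^ (k / 4) ≤ d :=
  notEQS_deterministic_lower_bound_general k hk
end

section
/- There exists a constant C > 0 such that for all integers n and k with k a multiple of 4 and 4 ≤ k ≤ n, there exists a nondeterministic OBDD of width at most C·k⁴·log₂ k computing the Boolean function NotEQS^k_n. -/
section Run

variable {Q : Type*}

def runPrefix (δ : ℕ → Bool → Q → Q) (q : Q) (x : ℕ → Bool) (m : ℕ) : Q :=
  (List.range m).foldl (fun q j => δ j (x j) q) q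

theorem runPrefix_succ (δ : ℕ → Bool → Q → Q) (q : Q) (x : ℕ → Bool) (m : ℕ) :
    runPrefix δ q x (m + 1) = δ m (x m) (runPrefix δ q x m) := by
  simp [runPrefix, List.range_succ]

theorem runPrefix_eq_of_le {δ : ℕ → Bool → Q → Q} {L : ℕ} (hδ : ∀ j ≥ L, ∀ b, δ j b = id)
    (q : Q) (x : ℕ → Bool) {m : ℕ} (hm : L ≤ m) : runPrefix δ q x m = runPrefix δ q x L := by
  induction m, hm using Nat.le_induction with
  | base => rfl
  | succ m hm ih => rw [runPrefix_succ, hδ m hm, id, ih]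

end Run

theorem NOBDD.exists_computes_of_guess {G Q : Type*} [Fintype G] [Fintype Q] {n : ℕ} (hn : 0 < n)
    (δ : G → ℕ → Bool → Q → Q) (q₀ : G → Q) (acc : G → Q → Prop) (f : (Fin n → Bool) → Bool)
    (hf : ∀ ν, f ν = true ↔
      ∃ g, acc g (runPrefix (δ g) (q₀ g) (Function.extend Fin.val ν fun _ => false) n)) :
    ∃ M : NOBDD n (Fintype.card G * Fintype.card Q + 1), M.computes f := by
  classical
  let e : Option (G × Q) ≃ Fin (Fintype.card G * Fintype.card Q + 1) :=
    Fintype.equivFinOfCardEq (by simp)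
  let T : ℕ → Bool → Fin _ → Set (Fin _) := fun j b v =>
    match e.symm v with
    | none => Set.range fun g => e (some (g, δ g j b (q₀ g)))
    | some (g, q) => {e (some (g, δ g j b q))}
  let M : NOBDD n _ :=
    ⟨Equiv.refl _, fun j => T j, e none,
      Finset.univ.filter fun v => ∃ g q, e.symm v = some (g, q) ∧ acc g q⟩
  refine ⟨M, fun ν => ?_⟩
  set x : ℕ → Bool := Function.extend Fin.val ν fun _ => false
  let step : Set (Fin _) → ℕ → Set (Fin _) := fun S j => {w | ∃ v ∈ S, w ∈ T j (x j) v}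
  have step_range (l : List ℕ) (h : G → Q) :
      l.foldl step (Set.range fun g => e (some (g, h g))) =
        Set.range fun g => e (some (g, l.foldl (fun q j => δ g j (x j) q) (h g))) := by
    induction l generalizing h with
    | nil => rfl
    | cons j l ih =>
      simp only [List.foldl_cons, ← ih]
      congr 1
      ext w
      simp [step, T, eq_comm]
  have reach_eq : M.reach ν = Set.range fun g => e (some (g, runPrefix (δ g) (q₀ g) x n)) := by
    have : M.reach ν = (List.range n).foldl step {e none} := by
      change (List.finRange n).foldl _ _ = _
      rw [← List.map_coe_finRange_eq_range, List.foldl_map]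
      congr
      funext S j
      simp [step, M, x, Fin.val_injective.extend_apply]
    obtain ⟨n, rfl⟩ := Nat.exists_eq_add_of_lt hn
    have first : step {e none} 0 = Set.range fun g => e (some (g, δ g 0 (x 0) (q₀ g))) := by
      ext w
      simp [step, T]
    rw [this, zero_add, List.range_succ_eq_map, List.foldl_cons, first, step_range]
    simp [runPrefix, List.range_succ_eq_map]
  simp [NOBDD.accepts, reach_eq, M, hf, x]

section Summary

variable (m : ℕ)

def summary (i : ℕ) (l : List Bool) : Fin (m + 1) × Option Bool :=
  (⟨min l.length m, by omega⟩, l[i]?)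

def summaryPush (i : ℕ) (b : Bool) (s : Fin (m + 1) × Option Bool) : Fin (m + 1) × Option Bool :=
  (⟨min (s.1 + 1) m, by omega⟩, if (s.1 : ℕ) = i then some b else s.2)

variable {m}

theorem summary_append_singleton {i : ℕ} (hi : i < m) (l : List Bool) (b : Bool) :
    summary m i (l ++ [b]) = summaryPush m i b (summary m i l) := by
  refine Prod.ext (Fin.ext ?_) ?_
  · simp [summary, summaryPush]
    omega
  · show (l ++ [b])[i]? = if min l.length m = i then some b else l[i]?
    rcases lt_trichotomy i l.length with h | rfl | h
    · rw [if_neg (by omega), List.getElem?_append_left h]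
    · simp [hi.le]
    · rw [if_neg (by omega), List.getElem?_eq_none (by simp; omega),
        List.getElem?_eq_none (by omega)]

theorem exists_summary_ne_iff (hm : 0 < m) {α β : List Bool}
    (hlen : α.length + β.length = 2 * m) :
    (∃ i : Fin m, summary m i α ≠ summary m i β) ↔ α ≠ β := by
  refine ⟨fun ⟨i, hi⟩ hαβ => hi (hαβ ▸ rfl), fun hne => ?_⟩
  by_cases hlen' : α.length = β.length
  · obtain ⟨i, hi⟩ : ∃ i, α[i]? ≠ β[i]? := by
      by_contra! h
      exact hne (List.ext_getElem? h)
    have him : i < m := by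
      by_contra
      exact hi (by rw [List.getElem?_eq_none (by omega), List.getElem?_eq_none (by omega)])
    exact ⟨⟨i, him⟩, fun h => hi (congrArg Prod.snd h)⟩
  · refine ⟨⟨0, hm⟩, fun h => hlen' ?_⟩
    have := congrArg (fun s => (s.1 : ℕ)) h
    simp only [summary] at this
    omega

end Summary

section ValueList

def valueList (x : ℕ → Bool) (b : Bool) (t : ℕ) : List Bool :=
  (List.range t).filterMap fun j => if x (2 * j) = b then some (x (2 * j + 1)) else none

variable (x : ℕ → Bool)

theorem valueList_succ (b : Bool) (t : ℕ) :
    valueList x b (t + 1) = valueList x b t ++ if x (2 * t) = b then [x (2 * t + 1)] else [] := by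
  rw [valueList, List.range_succ, List.filterMap_append]
  split_ifs <;> simp [*, valueList]

theorem length_valueList_false_add_true (t : ℕ) :
    (valueList x false t).length + (valueList x true t).length = t := by
  induction t with
  | zero => rfl
  | succ t ih =>
    cases h : x (2 * t) <;> simp [valueList_succ, h] <;> omega

theorem valueSubseq_eq_valueList {n k : ℕ} (hk : k ≤ n) (ν : Fin n → Bool) (b : Bool) :
    valueSubseq k b ν = valueList (Function.extend Fin.val ν fun _ => false) b (k / 2) := by
  refine List.filterMap_congr fun j hj => ?_
  have : 2 * j + 1 < n := by simp at hj; omega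
  simp only [dif_pos this]
  rw [← Fin.val_injective.extend_apply ν (fun _ => false) ⟨2 * j, by omega⟩,
    ← Fin.val_injective.extend_apply ν (fun _ => false) ⟨2 * j + 1, this⟩]

end ValueList

abbrev EQSState (m : ℕ) := (Fin (m + 1) × Option Bool) × (Fin (m + 1) × Option Bool) × Bool

/-- Positions `j` are 0-indexed: even ones carry marker bits, odd ones value bits. -/
def eqsStep (m L i j : ℕ) (b : Bool) (q : EQSState m) : EQSState m :=
  if L ≤ j then q
  else if j % 2 = 0 then (q.1, q.2.1, b)
  else if q.2.2 then (q.1, summaryPush m i b q.2.1, q.2.2)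
  else (summaryPush m i b q.1, q.2.1, q.2.2)

def eqsInit (m i : ℕ) : EQSState m := (summary m i [], summary m i [], false)

theorem runPrefix_eqsStep {m L i : ℕ} (hi : i < m) (x : ℕ → Bool) {t : ℕ} (ht : 2 * t ≤ L) :
    ∃ c, runPrefix (eqsStep m L i) (eqsInit m i) x (2 * t) =
      (summary m i (valueList x false t), summary m i (valueList x true t), c) := by
  induction t with
  | zero => exact ⟨false, rfl⟩
  | succ t ih =>
    obtain ⟨c, hc⟩ := ih (by omega)
    refine ⟨x (2 * t), ?_⟩
    rw [show 2 * (t + 1) = 2 * t + 1 + 1 by ring, runPrefix_succ, runPrefix_succ, hc]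
    have hodd : (2 * t + 1) % 2 = 1 := by omega
    cases h : x (2 * t) <;>
      simp [eqsStep, valueList_succ, summary_append_singleton hi, h, hodd,
        show ¬ L ≤ 2 * t by omega, show ¬ L ≤ 2 * t + 1 by omega]

theorem exists_nobdd_computes_notEQS {n m : ℕ} (hm : 0 < m) (hn : 4 * m ≤ n) :
    ∃ M : NOBDD n (Fintype.card (Fin m) * Fintype.card (EQSState m) + 1),
      M.computes (NotEQS n (4 * m)) := by
  refine NOBDD.exists_computes_of_guess (G := Fin m) (by omega) (fun i => eqsStep m (4 * m) i)
    (fun i => eqsInit m i) (fun _ q => q.1 ≠ q.2.1) _ fun ν => ?_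
  simp only [NotEQS, EQS, Bool.not_eq_eq_eq_not, Bool.not_true, decide_eq_false_iff_not,
    valueSubseq_eq_valueList hn, show 4 * m / 2 = 2 * m by omega]
  set x : ℕ → Bool := Function.extend Fin.val ν fun _ => false
  have run_eq (i : Fin m) : ∃ c, runPrefix (eqsStep m (4 * m) i) (eqsInit m i) x n =
      (summary m i (valueList x false (2 * m)), summary m i (valueList x true (2 * m)), c) := by
    rw [runPrefix_eq_of_le (δ := eqsStep m (4 * m) i)
        (fun j hj b => funext fun q => if_pos hj) _ _ hn, show 4 * m = 2 * (2 * m) by ring]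
    exact runPrefix_eqsStep i.isLt x le_rfl
  have hlen := length_valueList_false_add_true x (2 * m)
  rw [← ne_eq, ← exists_summary_ne_iff hm hlen]
  refine exists_congr fun i => ?_
  obtain ⟨c, hc⟩ := run_eq i
  rw [hc]

theorem card_eqsState (m : ℕ) : Fintype.card (EQSState m) = 18 * (m + 1) ^ 2 := by
  simp only [Fintype.card_prod, Fintype.card_fin, Fintype.card_option, Fintype.card_bool]
  ring

theorem card_fin_mul_card_eqsState_add_one_le {m : ℕ} (hm : 0 < m) :
    Fintype.card (Fin m) * Fintype.card (EQSState m) + 1 ≤ 1 * (4 * m) ^ 4 * Nat.log 2 (4 * m) := by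
  have hlog : 2 ≤ Nat.log 2 (4 * m) := Nat.le_log_of_pow_le one_lt_two (by omega)
  have hm3 : m ^ 3 ≤ m ^ 4 := Nat.pow_le_pow_right hm (by norm_num)
  rw [Fintype.card_fin, card_eqsState]
  calc m * (18 * (m + 1) ^ 2) + 1 ≤ m * (18 * (2 * m) ^ 2) + m ^ 4 := by
        gcongr
        · omega
        · exact Nat.one_le_pow 4 m hm
    _ ≤ 256 * m ^ 4 * 2 := by nlinarith
    _ ≤ 1 * (4 * m) ^ 4 * Nat.log 2 (4 * m) := Nat.mul_le_mul (by simp [mul_pow]) hlog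

/-- There is a constant `C > 0` such that for all `n, k` with `4 ∣ k` and `4 ≤ k ≤ n`,
there is a nondeterministic OBDD of width at most `C·k⁴·log₂ k` computing `NotEQS^k_n`. -/
theorem notEQS_nondeterministic_upper_bound :
    ∃ C : ℕ, 0 < C ∧
      ∀ n k : ℕ, 4 ∣ k → 4 ≤ k → k ≤ n →
        ∃ d : ℕ, d ≤ C * k ^ 4 * Nat.log 2 k ∧
          ∃ M : NOBDD n d, M.computes (NotEQS n k) := by
  refine ⟨1, one_pos, fun n k hk4 hk hkn => ?_⟩
  obtain ⟨m, rfl⟩ := hk4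
  have hm : 0 < m := by omega
  exact ⟨_, card_fin_mul_card_eqsState_add_one_le hm, exists_nobdd_computes_notEQS hm hkn⟩
end
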